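/- arXiv:2208.11795 — 2 statements merged into one kernel-verified Lean document; each statement's English description precedes it below -/
import Mathlib

section
/- Let R > 0 and let μ be a Borel measure on ℂ, finite on compact sets, satisfying volume growth bounds on B_R with exponents 0 < β⁺ ≤ β⁻. Then for every t > 0 and all radii 0 < r₁ ≤ r₂ ≤ R, the odometers satisfy v^{B_{r₁}}_t(x) ≤ v^{B_{r₂}}_t(x) for every x ∈ B_{r₁} ∖ {0}. -/
open MeasureTheory Metric Set Complex

noncomputable section

/-- Green's function of the ball of radius `R` centered at `z₀` (junk value `0` on the
diagonal, where the true value is `+∞`). -/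
def greenFn (R : ℝ) (z₀ x y : ℂ) : ℝ :=
  if x = y then 0
  else (2 * Real.pi)⁻¹ *
    Real.log (‖(R : ℂ) ^ 2 - (starRingEnd ℂ) (x - z₀) * (y - z₀)‖ /
      (R * ‖x - y‖))

/-- Extended-real-valued Green's function, with value `⊤` on the diagonal. -/
def greenE (R : ℝ) (z₀ x y : ℂ) : EReal :=
  if x = y then ⊤ else ((greenFn R z₀ x y : ℝ) : EReal)

/-- The Laplacian of `φ : ℂ → ℝ` (sum of the two pure second directional derivatives). -/
def lap (φ : ℂ → ℝ) (z : ℂ) : ℝ :=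
  iteratedFDeriv ℝ 2 φ z ![1, 1] + iteratedFDeriv ℝ 2 φ z ![Complex.I, Complex.I]

/-- The Laplacian of `f` within a set `s`. -/
def lapWithin (f : ℂ → ℝ) (s : Set ℂ) (z : ℂ) : ℝ :=
  iteratedFDerivWithin ℝ 2 f s z ![1, 1] + iteratedFDerivWithin ℝ 2 f s z ![Complex.I, Complex.I]

/-- `Δ w ≤ μ` distributionally in the ball `B_R`: for every nonnegative smooth `φ`
compactly supported in `B_R`, `∫ w · Δφ dLeb ≤ ∫ φ dμ`. -/
def LapLE (w : ℂ → ℝ) (μ : Measure ℂ) (R : ℝ) : Prop :=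
  ∀ φ : ℂ → ℝ, ContDiff ℝ (⊤ : ℕ∞) φ → HasCompactSupport φ →
    tsupport φ ⊆ ball (0 : ℂ) R → (∀ x, 0 ≤ φ x) →
    (∫ x, w x * lap φ x) ≤ ∫ x, φ x ∂μ

/-- The set of supersolutions `S^{B_R}_t`: continuous on the closed ball, `Δw ≤ μ`
distributionally in `B_R`, and `w ≥ -t·G_{B_R}(0,·)` on the closed ball. -/
def superSol (μ : Measure ℂ) (R t : ℝ) : Set (ℂ → ℝ) :=
  {w | ContinuousOn w (closedBall (0 : ℂ) R) ∧ LapLE w μ R ∧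
    ∀ y ∈ closedBall (0 : ℂ) R, -(t : EReal) * greenE R 0 0 y ≤ (w y : EReal)}

/-- The least supersolution `u^{B_R}_t` (pointwise infimum of all supersolutions). -/
def leastSuper (μ : Measure ℂ) (R t : ℝ) (x : ℂ) : ℝ :=
  sInf ((fun w : ℂ → ℝ => w x) '' superSol μ R t)

/-- The cluster `Λ^{B_R}_t = {x ∈ B_R : u^{B_R}_t(x) > -t·G_{B_R}(0,x)}`. -/
def cluster (μ : Measure ℂ) (R t : ℝ) : Set ℂ :=
  {x ∈ ball (0 : ℂ) R | -(t : EReal) * greenE R 0 0 x < (leastSuper μ R t x : EReal)}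

/-- The odometer `v^{B_R}_t = u^{B_R}_t + t·G_{B_R}(0,·)`, extended-real-valued
(equal to `+∞` at the origin). -/
def odometer (μ : Measure ℂ) (R t : ℝ) (x : ℂ) : EReal :=
  (leastSuper μ R t x : EReal) + (t : EReal) * greenE R 0 0 x

/-- The odometer `v^{B_R}_t`, real-valued (junk value at the origin). -/
def odometerR (μ : Measure ℂ) (R t : ℝ) (x : ℂ) : ℝ :=
  leastSuper μ R t x + t * greenFn R 0 0 x

/-- `μ` satisfies volume growth bounds on `B_R` with exponents `0 < βp ≤ βm`:
for some `r₀ ∈ (0,1)`, `r^βm ≤ μ(B_r(z)) ≤ r^βp` for all `z ∈ closure(B_R)`, `r ∈ (0,r₀)`. -/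
def VolumeGrowth (μ : Measure ℂ) (R βp βm : ℝ) : Prop :=
  ∃ r₀ ∈ Set.Ioo (0 : ℝ) 1, ∀ z ∈ closedBall (0 : ℂ) R, ∀ r ∈ Set.Ioo (0 : ℝ) r₀,
    ENNReal.ofReal (r ^ βm) ≤ μ (ball z r) ∧ μ (ball z r) ≤ ENNReal.ofReal (r ^ βp)

/-- The open annulus `𝔸_{r₁,r₂}(z) = B_{r₂}(z) ∖ closure(B_{r₁}(z))`. -/
def annul (r₁ r₂ : ℝ) (z : ℂ) : Set ℂ := ball z r₂ \ closedBall z r₁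

/-- `Λ` is a union of connected components of `S`. -/
def IsUnionOfComponents (Λ S : Set ℂ) : Prop :=
  Λ ⊆ S ∧ ∀ x ∈ Λ, connectedComponentIn S x ⊆ Λ


section Aux

lemma lap_zero_of_not_mem {φ : ℂ → ℝ} {x : ℂ} (hx : x ∉ tsupport φ) : lap φ x = 0 := by
  have h0 : iteratedFDeriv ℝ 2 φ x = 0 := by
    by_contra h
    exact hx (support_iteratedFDeriv_subset (𝕜 := ℝ) (f := φ) 2
      (by simpa [Function.mem_support] using h))
  simp [lap, h0]

lemma dirderiv2 (φ : ℂ → ℝ) (hφ : ContDiff ℝ (⊤ : ℕ∞) φ) (hs : HasCompactSupport φ) (v : ℂ) :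
    Continuous (fun z : ℂ => iteratedFDeriv ℝ 2 φ z ![v, v]) ∧
    HasCompactSupport (fun z : ℂ => iteratedFDeriv ℝ 2 φ z ![v, v]) ∧
    (∫ z : ℂ, iteratedFDeriv ℝ 2 φ z ![v, v]) = 0 := by
  have hcont : Continuous (fun z : ℂ => iteratedFDeriv ℝ 2 φ z ![v, v]) :=
    (ContinuousMultilinearMap.apply ℝ (fun _ : Fin 2 => ℂ) ℝ ![v, v]).continuous.comp
      (hφ.continuous_iteratedFDeriv (WithTop.coe_le_coe.mpr le_top))
  have hzero : ∀ x ∉ tsupport φ, iteratedFDeriv ℝ 2 φ x ![v, v] = 0 := by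
    intro x hx
    have h0 : iteratedFDeriv ℝ 2 φ x = 0 := by
      by_contra h
      exact hx (support_iteratedFDeriv_subset (𝕜 := ℝ) (f := φ) 2
        (by simpa [Function.mem_support] using h))
    simp [h0]
  have hcs : HasCompactSupport (fun z : ℂ => iteratedFDeriv ℝ 2 φ z ![v, v]) :=
    HasCompactSupport.intro hs hzero
  refine ⟨hcont, hcs, ?_⟩
  set g : ℂ → ℝ := fun z => fderiv ℝ φ z v with hg
  have hφ1 : ContDiff ℝ (⊤ : ℕ∞) (fderiv ℝ φ) := hφ.fderiv_right (by simp)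
  have hgsmooth : ContDiff ℝ (⊤ : ℕ∞) g :=
    (ContinuousLinearMap.apply ℝ ℝ v).contDiff.comp hφ1
  have hgsupp : HasCompactSupport g := by
    apply HasCompactSupport.intro hs
    intro x hx
    have h0 : fderiv ℝ φ x = 0 := by
      by_contra h
      exact hx (support_fderiv_subset (𝕜 := ℝ) (f := φ)
        (by simpa [Function.mem_support] using h))
    simp [hg, h0]
  obtain ⟨D, hD⟩ := hgsmooth.lipschitzWith_of_hasCompactSupport hgsupp (by simp)
  have h0 := LipschitzWith.integral_lineDeriv_mul_eq (μ := volume)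
    (LipschitzWith.const (1 : ℝ)) hD hgsupp (-v)
  have heq : ∀ z : ℂ, iteratedFDeriv ℝ 2 φ z ![v, v] = lineDeriv ℝ g z v := by
    intro z
    have hd : HasFDerivAt g
        ((ContinuousLinearMap.apply ℝ ℝ v).comp (fderiv ℝ (fderiv ℝ φ) z)) z :=
      (ContinuousLinearMap.apply ℝ ℝ v).hasFDerivAt.comp z
        ((hφ1.differentiable (by simp)) z).hasFDerivAt
    rw [hd.differentiableAt.lineDeriv_eq_fderiv, hd.fderiv]
    rw [iteratedFDeriv_two_apply]
    simp
  have hl : ∀ x : ℂ, lineDeriv ℝ (fun _ : ℂ => (1:ℝ)) x (-v) = 0 := by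
    intro x; simp [lineDeriv]
  simp only [hl, zero_mul, integral_zero, neg_neg, mul_one] at h0
  calc ∫ z : ℂ, iteratedFDeriv ℝ 2 φ z ![v, v] = ∫ x : ℂ, lineDeriv ℝ g x v := by
        simp_rw [heq]
    _ = 0 := h0.symm

lemma lap_integral_package (φ : ℂ → ℝ) (hφ : ContDiff ℝ (⊤ : ℕ∞) φ) (hs : HasCompactSupport φ) :
    Continuous (lap φ) ∧ HasCompactSupport (lap φ) ∧ (∫ z : ℂ, lap φ z) = 0 := by
  obtain ⟨c1, s1, i1⟩ := dirderiv2 φ hφ hs 1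
  obtain ⟨c2, s2, i2⟩ := dirderiv2 φ hφ hs Complex.I
  refine ⟨c1.add c2, s1.add s2, ?_⟩
  have hadd := integral_add (μ := volume) (c1.integrable_of_hasCompactSupport s1)
    (c2.integrable_of_hasCompactSupport s2)
  calc (∫ z : ℂ, lap φ z)
      = (∫ z : ℂ, iteratedFDeriv ℝ 2 φ z ![1, 1]) +
        ∫ z : ℂ, iteratedFDeriv ℝ 2 φ z ![Complex.I, Complex.I] := hadd
    _ = 0 := by rw [i1, i2, add_zero]

lemma greenFn_zero_left {R : ℝ} (hR : 0 < R) {y : ℂ} (hy : y ≠ 0) :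
    greenFn R 0 0 y = (2 * Real.pi)⁻¹ * Real.log (R / ‖y‖) := by
  rw [greenFn, if_neg (Ne.symm hy)]
  congr 2
  have h1 : ((R:ℂ) ^ 2 - (starRingEnd ℂ) ((0 : ℂ) - 0) * (y - 0)) = (R:ℂ) ^ 2 := by simp
  rw [h1]
  have h2 : ‖((R:ℂ) ^ 2)‖ = R ^ 2 := by
    rw [norm_pow, Complex.norm_real, Real.norm_eq_abs, abs_of_pos hR]
  have h3 : ‖((0 : ℂ) - y)‖ = ‖y‖ := by simp
  rw [h2, h3]
  have hy' : ‖y‖ ≠ 0 := by simpa using hy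
  field_simp

lemma greenFn_mono_eq {r₁ r₂ : ℝ} (h1 : 0 < r₁) (h12 : r₁ ≤ r₂) {y : ℂ} (hy : y ≠ 0) :
    greenFn r₂ 0 0 y = greenFn r₁ 0 0 y + (2 * Real.pi)⁻¹ * Real.log (r₂ / r₁) := by
  have h2 : 0 < r₂ := h1.trans_le h12
  have hy' : (0:ℝ) < ‖y‖ := norm_pos_iff.mpr hy
  rw [greenFn_zero_left h1 hy, greenFn_zero_left h2 hy, ← mul_add]
  congr 1
  rw [Real.log_div (ne_of_gt h2) (ne_of_gt hy'), Real.log_div (ne_of_gt h1) (ne_of_gt hy'),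
    Real.log_div (ne_of_gt h2) (ne_of_gt h1)]
  ring

lemma superSol_lb {μ : Measure ℂ} {R t : ℝ} {w : ℂ → ℝ} (hw : w ∈ superSol μ R t)
    {y : ℂ} (hy : y ∈ closedBall (0:ℂ) R) (h0 : y ≠ 0) :
    -t * greenFn R 0 0 y ≤ w y := by
  have h := hw.2.2 y hy
  rw [greenE, if_neg (Ne.symm h0),
    show -(t:EReal) = ((-t:ℝ):EReal) from (EReal.coe_neg t).symm,
    ← EReal.coe_mul, EReal.coe_le_coe_iff] at h
  exact h

lemma zero_mem_superSol (μ : Measure ℂ) {R t : ℝ} (hR : 0 < R) (ht : 0 < t) :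
    (0 : ℂ → ℝ) ∈ superSol μ R t := by
  refine ⟨continuousOn_const, ?_, ?_⟩
  · intro φ hφ hcs hsub hpos
    simp only [Pi.zero_apply, zero_mul, integral_zero]
    exact integral_nonneg hpos
  · intro y hy
    simp only [Pi.zero_apply, EReal.coe_zero]
    by_cases h0 : y = 0
    · subst h0
      rw [greenE, if_pos rfl, EReal.mul_top_of_neg (by exact_mod_cast neg_neg_of_pos ht)]
      exact bot_le
    · rw [greenE, if_neg (Ne.symm h0)]
      have hgF : 0 ≤ greenFn R 0 0 y := by
        rw [greenFn_zero_left hR h0]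
        apply mul_nonneg (inv_nonneg.2 (by positivity))
        apply Real.log_nonneg
        rw [le_div_iff₀ (norm_pos_iff.mpr h0), one_mul]
        simpa [Complex.dist_eq] using mem_closedBall.1 hy
      rw [show -(t:EReal) = ((-t:ℝ):EReal) from (EReal.coe_neg t).symm, ← EReal.coe_mul]
      exact_mod_cast mul_nonpos_of_nonpos_of_nonneg (by linarith) hgF

lemma shift_mem {μ : Measure ℂ} {r₁ r₂ t : ℝ} (h1 : 0 < r₁) (h12 : r₁ ≤ r₂) (ht : 0 < t)
    {w : ℂ → ℝ} (hw : w ∈ superSol μ r₂ t) :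
    (fun z => w z + t * ((2 * Real.pi)⁻¹ * Real.log (r₂ / r₁))) ∈ superSol μ r₁ t := by
  set c := t * ((2 * Real.pi)⁻¹ * Real.log (r₂ / r₁)) with hc
  refine ⟨(hw.1.mono (closedBall_subset_closedBall h12)).add continuousOn_const, ?_, ?_⟩
  · intro φ hφ hcs hsub hpos
    obtain ⟨hlapc, hlaps, hlapi⟩ := lap_integral_package φ hφ hcs
    have hsup2 : tsupport φ ⊆ ball (0:ℂ) r₂ := hsub.trans (ball_subset_ball h12)
    have hWcont : Continuous (fun x => w x * lap φ x) := by
      rw [continuous_iff_continuousAt]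
      intro z
      by_cases hz : z ∈ ball (0:ℂ) r₂
      · exact (hw.1.continuousAt (Filter.mem_of_superset (isOpen_ball.mem_nhds hz)
          ball_subset_closedBall)).mul hlapc.continuousAt
      · have hz' : z ∈ (tsupport φ)ᶜ := fun h => hz (hsup2 h)
        have hev : (fun x => w x * lap φ x) =ᶠ[nhds z] (fun _ => (0:ℝ)) := by
          filter_upwards [(isClosed_tsupport φ).isOpen_compl.mem_nhds hz'] with x hx
          rw [lap_zero_of_not_mem hx, mul_zero]
        exact continuousAt_const.congr hev.symm
    have hWsupp : HasCompactSupport (fun x => w x * lap φ x) :=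
      HasCompactSupport.intro hcs (fun x hx => by rw [lap_zero_of_not_mem hx, mul_zero])
    have hWint : Integrable (fun x => w x * lap φ x) :=
      hWcont.integrable_of_hasCompactSupport hWsupp
    have hCint : Integrable (fun x => c * lap φ x) :=
      (hlapc.integrable_of_hasCompactSupport hlaps).const_mul c
    have hsplit : (∫ x, (w x + c) * lap φ x)
        = (∫ x, w x * lap φ x) + c * ∫ x, lap φ x := by
      simp_rw [add_mul]
      rw [integral_add hWint hCint, integral_const_mul]
    rw [hsplit, hlapi, mul_zero, add_zero]
    exact hw.2.1 φ hφ hcs hsup2 hpos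
  · intro y hy
    by_cases h0 : y = 0
    · subst h0
      rw [greenE, if_pos rfl, EReal.mul_top_of_neg (by exact_mod_cast neg_neg_of_pos ht)]
      exact bot_le
    · have hy2 : y ∈ closedBall (0:ℂ) r₂ := closedBall_subset_closedBall h12 hy
      have hlb := superSol_lb hw hy2 h0
      rw [greenFn_mono_eq h1 h12 h0, mul_add] at hlb
      rw [greenE, if_neg (Ne.symm h0),
        show -(t:EReal) = ((-t:ℝ):EReal) from (EReal.coe_neg t).symm,
        ← EReal.coe_mul, EReal.coe_le_coe_iff]
      show -t * greenFn r₁ 0 0 y ≤ w y + c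
      have hcc : -t * ((2 * Real.pi)⁻¹ * Real.log (r₂ / r₁)) = -c := by rw [hc]; ring
      rw [hcc] at hlb
      linarith

end Aux

/-- Monotonicity of odometers in the domain: for `0 < r₁ ≤ r₂ ≤ R`,
`v^{B_{r₁}}_t ≤ v^{B_{r₂}}_t` on `B_{r₁} ∖ {0}`. -/
theorem statement6 (R : ℝ) (hR : 0 < R) (μ : Measure ℂ) [IsFiniteMeasureOnCompacts μ]
    (βp βm : ℝ) (hβp : 0 < βp) (hβ : βp ≤ βm) (hvol : VolumeGrowth μ R βp βm)
    (t : ℝ) (ht : 0 < t) :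
    ∀ r₁ r₂ : ℝ, 0 < r₁ → r₁ ≤ r₂ → r₂ ≤ R →
      ∀ x ∈ ball (0 : ℂ) r₁ \ {(0 : ℂ)},
        odometerR μ r₁ t x ≤ odometerR μ r₂ t x := by
  intro r₁ r₂ h1 h12 h2R x hx
  obtain ⟨hx1, hx0'⟩ := hx
  have hx0 : x ≠ 0 := by simpa using hx0'
  set c := t * ((2 * Real.pi)⁻¹ * Real.log (r₂ / r₁)) with hc
  have h2 : 0 < r₂ := h1.trans_le h12
  have hxc1 : x ∈ closedBall (0:ℂ) r₁ := ball_subset_closedBall hx1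
  have hbdd : BddBelow ((fun w : ℂ → ℝ => w x) '' superSol μ r₁ t) := by
    refine ⟨-t * greenFn r₁ 0 0 x, ?_⟩
    rintro b ⟨w, hw, rfl⟩
    exact superSol_lb hw hxc1 hx0
  have hne2 : ((fun w : ℂ → ℝ => w x) '' superSol μ r₂ t).Nonempty :=
    ⟨_, Set.mem_image_of_mem _ (zero_mem_superSol μ h2 ht)⟩
  have key1 : ∀ w ∈ superSol μ r₂ t, leastSuper μ r₁ t x ≤ w x + c := by
    intro w hw
    exact csInf_le hbdd (Set.mem_image_of_mem _ (shift_mem h1 h12 ht hw))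
  have key2 : leastSuper μ r₁ t x - c ≤ leastSuper μ r₂ t x := by
    apply le_csInf hne2
    rintro b ⟨w, hw, rfl⟩
    linarith [key1 w hw]
  have hg : greenFn r₂ 0 0 x = greenFn r₁ 0 0 x + (2 * Real.pi)⁻¹ * Real.log (r₂ / r₁) :=
    greenFn_mono_eq h1 h12 hx0
  simp only [odometerR]
  rw [hg]
  have hdist : t * (greenFn r₁ 0 0 x + (2 * Real.pi)⁻¹ * Real.log (r₂ / r₁))
      = t * greenFn r₁ 0 0 x + c := by rw [hc]; ring
  rw [hdist]
  linarith [key2]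
end
end

section
/- Fix ρ ∈ (0,1) and x₀ ∈ ℂ. For integers j ≥ 0 define l_j := ρ·2^{−j/4}·2^{−50}, d₀ := (3/4)·ρ, d_j := d_{j−1} − 32·l_{j−1} for j ≥ 1, and the shells S_j := { y ∈ ℂ : d_j − l_j < |y − x₀| < d_j + l_j } (equivalently S_j = ∂B_{d_j}(x₀) + B_{l_j}). Then for every integer N₀ ≥ 200, setting ε_j := 2^{−(N₀+j)} and d_j⁺ := d_j + 8·l_j, the following hold: (i) the closure of the union ⋃_{j≥0} (S_j + B_{8 l_j}) = ⋃_{j≥0} { y : d_j − 9 l_j < |y − x₀| < d_j + 9 l_j } is contained in the annulus 𝔸_{ρ/2, ρ}(x₀); (ii) for every j ≥ 0, (S_j + B_{8 l_j}) ∩ (⋃_{j′ ≠ j} S_{j′}) = ∅; (iii) for every j ≥ 0 and every z ∈ S_j, B_{8·√(ε_j)·ρ}(z) ⊆ 𝔸_{ρ/2, d_j⁺}(x₀) ⊆ 𝔸_{ρ/2, ρ}(x₀). -/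
open Metric Set

noncomputable section

/-!
The widths `l_j = ρ 2⁻⁵⁰ t^j`, `t = 2^{-1/4} ≤ 6/7`, decrease geometrically, so the radii `d_j`
decrease by at most `32 ρ 2⁻⁵⁰ ∑ (6/7)^j = 224 ρ 2⁻⁵⁰ < 0.224 ρ` in total: every fattened shell
lies in the fixed closed annulus `0.517 ρ ≤ |y - x₀| ≤ 0.759 ρ`, well inside `𝔸_{ρ/2,ρ}(x₀)`.
Since consecutive radii differ by `32 l_j` and the widths decrease, shells of different indices
are separated. Finally `8 √ε_j ρ ≤ 8 · 2⁻¹⁰⁰ ρ 2^{-j/4}` is less than `l_j`,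
so a ball of that radius around a point of `S_j` stays in the shell of width `2 l_j`.
-/

section Shell

variable {α : Type*} [PseudoMetricSpace α]

def shell (x : α) (c r : ℝ) : Set α := {y | c - r < dist y x ∧ dist y x < c + r}

theorem shell_subset_closedBall_diff_ball (x : α) (c r : ℝ) :
    shell x c r ⊆ closedBall x (c + r) \ ball x (c - r) := fun _ hy =>
  ⟨mem_closedBall.2 hy.2.le, fun h => (mem_ball.1 h).not_gt hy.1⟩

theorem ball_subset_shell {x z : α} {c r : ℝ} (hz : z ∈ shell x c r) (δ : ℝ) :
    ball z δ ⊆ shell x c (r + δ) := by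
  intro y hy
  rw [mem_ball] at hy
  have h₁ := dist_triangle y z x
  have h₂ := dist_triangle_left z x y
  exact ⟨by linarith [hz.1], by linarith [hz.2]⟩

theorem disjoint_shell_of_add_le_sub {x : α} {c r c' r' : ℝ} (h : c + r ≤ c' - r') :
    Disjoint (shell x c r) (shell x c' r') :=
  Set.disjoint_left.2 fun _ hy hy' => by linarith [hy.2, hy'.1]

theorem disjoint_shell_of_ne {x : α} {d l : ℕ → ℝ}
    (hl : Antitone l) (hl0 : ∀ j, 0 ≤ l j) (hd : ∀ j, d (j + 1) ≤ d j - 10 * l j)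
    {i j : ℕ} (hij : i ≠ j) : Disjoint (shell x (d i) (9 * l i)) (shell x (d j) (l j)) := by
  have hd_anti : Antitone d := antitone_nat_of_succ_le fun j => by linarith [hd j, hl0 j]
  rcases hij.lt_or_gt with h | h
  · refine (disjoint_shell_of_add_le_sub ?_).symm
    linarith [hd_anti (Nat.succ_le_of_lt h), hd i, hl h.le, hl0 j]
  · refine disjoint_shell_of_add_le_sub ?_
    linarith [hd_anti (Nat.succ_le_of_lt h), hd j, hl h.le, hl0 i]

end Shell

theorem shell_subset_annul {x : ℂ} {c r r₁ r₂ : ℝ} (h₁ : r₁ ≤ c - r) (h₂ : c + r ≤ r₂) :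
    shell x c r ⊆ annul r₁ r₂ x := fun _ hy =>
  ⟨mem_ball.2 (by linarith [hy.2]), fun h => by linarith [mem_closedBall.1 h, hy.1]⟩

theorem annul_subset_annul {x : ℂ} {r₁ r₂ r₂' : ℝ} (h : r₂ ≤ r₂') :
    annul r₁ r₂ x ⊆ annul r₁ r₂' x :=
  sdiff_subset_sdiff_left (ball_subset_ball h)

theorem closure_iUnion_shell_subset_annul {ι : Type*} {x : ℂ} {c r : ι → ℝ} {a b r₁ r₂ : ℝ}
    (hc : ∀ i, a ≤ c i - r i ∧ c i + r i ≤ b) (ha : r₁ < a) (hb : b < r₂) :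
    closure (⋃ i, shell x (c i) (r i)) ⊆ annul r₁ r₂ x := by
  have hK : IsClosed (closedBall x b \ ball x a) := isClosed_closedBall.sdiff isOpen_ball
  refine (closure_minimal (iUnion_subset fun i => ?_) hK).trans fun y hy => ?_
  · exact (shell_subset_closedBall_diff_ball x _ _).trans
      (sdiff_subset_sdiff (closedBall_subset_closedBall (hc i).2)
        (ball_subset_ball (hc i).1))
  · have h₁ := mem_closedBall.1 hy.1
    have h₂ : a ≤ dist y x := not_lt.1 fun h => hy.2 (mem_ball.2 h)
    exact ⟨mem_ball.2 (by linarith), fun h => by linarith [mem_closedBall.1 h]⟩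

theorem sub_tsum_le_of_sub_succ_le {d g : ℕ → ℝ} (hg : Summable g) (hg0 : ∀ j, 0 ≤ g j)
    (hd : ∀ j, d j - d (j + 1) ≤ g j) (j : ℕ) : d 0 - ∑' i, g i ≤ d j := by
  have h : d 0 - d j ≤ ∑ i ∈ Finset.range j, g i := by
    rw [← Finset.sum_range_sub']
    exact Finset.sum_le_sum fun i _ => hd i
  linarith [hg.sum_le_tsum (Finset.range j) fun i _ => hg0 i]

theorem two_rpow_neg_div_four (j : ℕ) :
    (2 : ℝ) ^ (-(j : ℝ) / 4) = ((2 : ℝ) ^ (-(1 : ℝ) / 4)) ^ j := by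
  rw [← Real.rpow_natCast, ← Real.rpow_mul (by norm_num)]
  ring_nf

theorem two_rpow_neg_quarter_le : (2 : ℝ) ^ (-(1 : ℝ) / 4) ≤ 6 / 7 := by
  rw [← pow_le_pow_iff_left₀ (by positivity) (by norm_num) (four_ne_zero),
    ← Real.rpow_natCast, ← Real.rpow_mul (by norm_num)]
  norm_num

theorem eight_mul_sqrt_two_rpow_mul_lt {N : ℕ} (hN : 200 ≤ N) (j : ℕ) {ρ : ℝ} (hρ : 0 < ρ) :
    8 * √((2 : ℝ) ^ (-((N : ℝ) + j))) * ρ < ρ * 2 ^ (-(j : ℝ) / 4) * 2 ^ (-50 : ℝ) := by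
  have hN' : (200 : ℝ) ≤ N := by exact_mod_cast hN
  have hj : (0 : ℝ) ≤ j := j.cast_nonneg
  have hsqrt : √((2 : ℝ) ^ (-((N : ℝ) + j))) ≤ 2 ^ (-100 : ℝ) * 2 ^ (-(j : ℝ) / 4) := by
    rw [Real.sqrt_eq_rpow, ← Real.rpow_mul (by norm_num), ← Real.rpow_add (by norm_num)]
    exact Real.rpow_le_rpow_of_exponent_le (by norm_num) (by linarith)
  have h8 : (8 : ℝ) * 2 ^ (-100 : ℝ) < 2 ^ (-50 : ℝ) := by norm_num
  have ht : (0 : ℝ) < 2 ^ (-(j : ℝ) / 4) := by positivity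
  calc 8 * √((2 : ℝ) ^ (-((N : ℝ) + j))) * ρ
      ≤ 8 * (2 ^ (-100 : ℝ) * 2 ^ (-(j : ℝ) / 4)) * ρ := by gcongr
    _ = ρ * 2 ^ (-(j : ℝ) / 4) * (8 * 2 ^ (-100 : ℝ)) := by ring
    _ < ρ * 2 ^ (-(j : ℝ) / 4) * 2 ^ (-50 : ℝ) := by gcongr

theorem widths_antitone_pos_le_geometric {ρ : ℝ} (hρ : 0 < ρ) {l : ℕ → ℝ}
    (hl : ∀ j : ℕ, l j = ρ * 2 ^ (-(j : ℝ) / 4) * 2 ^ (-50 : ℝ)) :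
    Antitone l ∧ ∀ j, 0 < l j ∧ l j ≤ ρ * 2 ^ (-50 : ℝ) * (6 / 7) ^ j := by
  have hl' : ∀ j, l j = ρ * 2 ^ (-50 : ℝ) * ((2 : ℝ) ^ (-(1 : ℝ) / 4)) ^ j := fun j => by
    rw [hl, two_rpow_neg_div_four]; ring
  have ht : (2 : ℝ) ^ (-(1 : ℝ) / 4) ≤ 6 / 7 := two_rpow_neg_quarter_le
  refine ⟨fun i j hij => ?_, fun j => ⟨by rw [hl']; positivity, ?_⟩⟩
  · rw [hl', hl']
    exact mul_le_mul_of_nonneg_left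
      (pow_le_pow_of_le_one (by positivity) (by linarith) hij) (by positivity)
  · rw [hl']
    gcongr

theorem sub_le_of_eq_sub_mul_of_le_geometric {d l : ℕ → ℝ} {A c q : ℝ} (hc : 0 ≤ c)
    (hq0 : 0 ≤ q) (hq : q < 1) (hl0 : ∀ j, 0 ≤ l j) (hl : ∀ j, l j ≤ A * q ^ j)
    (hd : ∀ j, d (j + 1) = d j - c * l j) (j : ℕ) : d 0 - c * A * (1 - q)⁻¹ ≤ d j := by
  have hA : 0 ≤ A := by simpa using (hl0 0).trans (hl 0)
  have hg : Summable fun i => c * A * q ^ i := (summable_geometric_of_lt_one hq0 hq).mul_left _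
  rw [← tsum_geometric_of_lt_one hq0 hq, ← tsum_mul_left]
  refine sub_tsum_le_of_sub_succ_le hg (fun i => by positivity) (fun i => ?_) j
  rw [hd, mul_assoc]
  linarith [mul_le_mul_of_nonneg_left (hl i) hc]

theorem shell_parameter_bounds {ρ : ℝ} (hρ : 0 < ρ) {l d : ℕ → ℝ}
    (hl : ∀ j : ℕ, l j = ρ * 2 ^ (-(j : ℝ) / 4) * 2 ^ (-50 : ℝ))
    (hd0 : d 0 = 3 / 4 * ρ) (hd : ∀ j : ℕ, d (j + 1) = d j - 32 * l j) :
    Antitone l ∧ ∀ j, 0 < l j ∧ l j ≤ ρ / 1000 ∧ 3 / 4 * ρ - 224 * (ρ / 1000) ≤ d j ∧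
      d j ≤ 3 / 4 * ρ := by
  obtain ⟨hl_anti, hl_bound⟩ := widths_antitone_pos_le_geometric hρ hl
  have hsmall : ρ * 2 ^ (-50 : ℝ) ≤ ρ / 1000 := by
    have : (2 : ℝ) ^ (-50 : ℝ) ≤ 1 / 1000 := by norm_num
    linarith [mul_le_mul_of_nonneg_left this hρ.le]
  have hd_anti : Antitone d :=
    antitone_nat_of_succ_le fun j => by linarith [hd j, (hl_bound j).1]
  refine ⟨hl_anti, fun j => ⟨(hl_bound j).1, ?_, ?_, hd0 ▸ hd_anti j.zero_le⟩⟩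
  · exact (hl_bound j).2.trans <| (mul_le_of_le_one_right (by positivity)
      (pow_le_one₀ (by norm_num) (by norm_num))).trans hsmall
  · have := sub_le_of_eq_sub_mul_of_le_geometric (by norm_num) (by norm_num) (by norm_num)
      (fun j => (hl_bound j).1.le) (fun j => (hl_bound j).2) hd j
    rw [hd0, show (1 - 6 / 7 : ℝ)⁻¹ = 7 by norm_num] at this
    linarith

/-- Properties of the shell decomposition: the fattened shells stay in
the annulus `𝔸_{ρ/2,ρ}(x₀)`, distinct shells are well separated, and balls of radius
`8·√(ε_j)·ρ` around points of `S_j` stay inside `𝔸_{ρ/2, d_j⁺}(x₀) ⊆ 𝔸_{ρ/2,ρ}(x₀)`. -/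
theorem statement18 (ρ : ℝ) (hρ : ρ ∈ Set.Ioo (0 : ℝ) 1) (x₀ : ℂ)
    (l : ℕ → ℝ) (hl : ∀ j : ℕ, l j = ρ * 2 ^ (-(j : ℝ) / 4) * 2 ^ (-50 : ℝ))
    (d : ℕ → ℝ) (hd0 : d 0 = 3 / 4 * ρ) (hd : ∀ j : ℕ, d (j + 1) = d j - 32 * l j)
    (N₀ : ℕ) (hN₀ : 200 ≤ N₀)
    (ε : ℕ → ℝ) (hε : ∀ j : ℕ, ε j = 2 ^ (-(((N₀ : ℝ)) + (j : ℝ))))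
    (S : ℕ → Set ℂ)
    (hS : ∀ j : ℕ, S j = {y : ℂ | d j - l j < dist y x₀ ∧ dist y x₀ < d j + l j}) :
    closure (⋃ j : ℕ, {y : ℂ | d j - 9 * l j < dist y x₀ ∧ dist y x₀ < d j + 9 * l j})
        ⊆ annul (ρ / 2) ρ x₀ ∧
      (∀ j : ℕ, {y : ℂ | d j - 9 * l j < dist y x₀ ∧ dist y x₀ < d j + 9 * l j} ∩
          (⋃ (j' : ℕ) (_ : j' ≠ j), S j') = ∅) ∧
      ∀ j : ℕ, ∀ z ∈ S j,
        ball z (8 * Real.sqrt (ε j) * ρ) ⊆ annul (ρ / 2) (d j + 8 * l j) x₀ ∧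
          annul (ρ / 2) (d j + 8 * l j) x₀ ⊆ annul (ρ / 2) ρ x₀ := by
  obtain ⟨hl_anti, hbound⟩ := shell_parameter_bounds hρ.1 hl hd0 hd
  have hradius (j : ℕ) : 8 * √(ε j) * ρ < l j := by
    rw [hε, hl]
    exact eight_mul_sqrt_two_rpow_mul_lt hN₀ j hρ.1
  refine ⟨?_, fun j => ?_, fun j z hz => ?_⟩
  · refine closure_iUnion_shell_subset_annul (a := 3 / 4 * ρ - 233 * (ρ / 1000))
      (b := 3 / 4 * ρ + 9 * (ρ / 1000)) (fun j => ?_) (by linarith [hρ.1]) (by linarith [hρ.1])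
    constructor <;> linarith [hbound j]
  · rw [← Set.disjoint_iff_inter_eq_empty, Set.disjoint_iUnion₂_right]
    intro j' hj'
    rw [hS]
    exact disjoint_shell_of_ne hl_anti (fun j => (hbound j).1.le)
      (fun j => by linarith [hd j, hbound j]) hj'.symm
  · rw [hS] at hz
    have hδ := (ball_subset_ball (hradius j).le).trans (ball_subset_shell hz (l j))
    refine ⟨hδ.trans (shell_subset_annul ?_ ?_), annul_subset_annul ?_⟩ <;>
      linarith [hbound j, hρ.1]
end
end
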